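/- Let K be a field, a₁, …, a_{r₁} ∈ K pairwise distinct and b₁, …, b_{r₂} ∈ K pairwise distinct. In K[x,y] (MvPolynomial (Fin 2) K), set Q₁ := ∏_{j=1}^{r₁} (x − a_j) and Q₂ := ∏_{k=1}^{r₂} (y − b_k). Fix indices j₀ ∈ {1,…,r₁} and k₀ ∈ {1,…,r₂} and set g := (∏_{j ≠ j₀} (x − a_j)) · (∏_{k ≠ k₀} (y − b_k)). Then the saturation of the ideal (Q₁, Q₂) by g equals the ideal generated by x − a_{j₀} and y − b_{k₀}: that is, {f ∈ K[x,y] : ∃ n ∈ ℕ, g^n · f ∈ (Q₁, Q₂)} = (x − a_{j₀}, y − b_{k₀}). -/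

import Mathlib

/-!
The ideal `m = (x - a_{j₀}, y - b_{k₀})` is the kernel of evaluation at the point
`(a_{j₀}, b_{k₀})`, hence prime. It contains `(Q₁, Q₂)` but not `g`, because the factors of
`g` do not vanish at that point (this is where distinctness of the `a_j` and of the `b_k`
enters).
So `gⁿ f ∈ (Q₁, Q₂) ⊆ m` forces `f ∈ m`. Conversely `g · m ⊆ (Q₁, Q₂)`, since
`(x - a_{j₀}) g` is a multiple of `Q₁` and `(y - b_{k₀}) g` a multiple of `Q₂`.
-/

open MvPolynomial

theorem Ideal.setOf_exists_pow_mul_mem_eq_of_isPrime {R : Type*} [CommRing R]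
    {I P : Ideal R} (hP : P.IsPrime) {g : R} (hIP : I ≤ P) (hg : g ∉ P)
    (hPg : P ≤ I.colon {g}) :
    {f | ∃ n : ℕ, g ^ n * f ∈ I} = (P : Set R) := by
  ext f
  constructor
  · rintro ⟨n, hn⟩
    exact (hP.mem_or_mem (hIP hn)).resolve_left fun h => hg (hP.mem_of_pow_mem n h)
  · intro hf
    refine ⟨1, ?_⟩
    simpa [mul_comm] using Submodule.mem_colon_singleton.1 (hPg hf)

namespace MvPolynomial

variable {R σ : Type*} [CommRing R]

theorem sub_C_eval_mem_span_X_sub_C (x : σ → R) (f : MvPolynomial σ R) :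
    f - C (eval x f) ∈ Ideal.span (Set.range fun i => X i - C (x i)) := by
  set m := Ideal.span (Set.range fun i => (X i - C (x i) : MvPolynomial σ R))
  induction f using MvPolynomial.induction_on with
  | C c => simp
  | add p q hp hq =>
    simpa only [map_add, add_sub_add_comm] using m.add_mem hp hq
  | mul_X p i hp =>
    have hXi : X i - C (x i) ∈ m := Ideal.subset_span ⟨i, rfl⟩
    have : p * X i - C (eval x (p * X i)) = p * (X i - C (x i)) + (p - C (eval x p)) * C (x i) := by
      simp only [eval_X, map_mul]
      ring
    rw [this]
    exact m.add_mem (m.mul_mem_left _ hXi) (m.mul_mem_right _ hp)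

theorem ker_eval_eq_span_X_sub_C (x : σ → R) :
    RingHom.ker (eval x) = Ideal.span (Set.range fun i => (X i - C (x i) : MvPolynomial σ R)) := by
  refine le_antisymm (fun f hf => ?_) ?_
  · simpa [(RingHom.mem_ker).1 hf] using sub_C_eval_mem_span_X_sub_C x f
  · rw [Ideal.span_le]
    rintro _ ⟨i, rfl⟩
    simp

theorem span_pair_X_sub_C_eq_ker_eval (u v : R) :
    Ideal.span {X 0 - C u, X 1 - C v} =
      RingHom.ker (eval ![u, v] : MvPolynomial (Fin 2) R →+* R) := by
  rw [ker_eval_eq_span_X_sub_C]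
  congr 1
  ext p
  simp [Fin.exists_fin_two, eq_comm]

end MvPolynomial

/-- Identity `[P_{1,j₀}, P_{2,k₀}] = (Q) : (∏_{j≠j₀} P_{1,j} ∏_{k≠k₀} P_{2,k})^∞`
from the proof of Lemma 2(i), b)⇒a): the saturation of the ideal of the squarefree
products `Q₁, Q₂` by the complementary product of factors is the maximal ideal
`(x - a_{j₀}, y - b_{k₀})`. -/
theorem saturation_span_products_eq
    (K : Type*) [Field K]
    (r₁ r₂ : ℕ) (a : Fin r₁ → K) (b : Fin r₂ → K)
    (ha : Function.Injective a) (hb : Function.Injective b)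
    (j₀ : Fin r₁) (k₀ : Fin r₂) :
    {f : MvPolynomial (Fin 2) K | ∃ n : ℕ,
        ((∏ j ∈ Finset.univ.erase j₀, (X 0 - C (a j))) *
         (∏ k ∈ Finset.univ.erase k₀, (X 1 - C (b k)))) ^ n * f ∈
        Ideal.span ({∏ j, (X 0 - C (a j)), ∏ k, (X 1 - C (b k))} :
          Set (MvPolynomial (Fin 2) K))} =
      ↑(Ideal.span ({X 0 - C (a j₀), X 1 - C (b k₀)} :
          Set (MvPolynomial (Fin 2) K))) := by
  rw [span_pair_X_sub_C_eq_ker_eval]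
  refine Ideal.setOf_exists_pow_mul_mem_eq_of_isPrime (RingHom.ker_isPrime _) ?_ ?_ ?_
  · rw [Ideal.span_le]
    rintro p (rfl | rfl) <;> rw [SetLike.mem_coe, RingHom.mem_ker, map_prod]
    · exact Finset.prod_eq_zero (Finset.mem_univ j₀) (by simp)
    · exact Finset.prod_eq_zero (Finset.mem_univ k₀) (by simp)
  · rw [RingHom.mem_ker, map_mul, map_prod, map_prod]
    refine mul_ne_zero (Finset.prod_ne_zero_iff.2 fun j hj => ?_)
      (Finset.prod_ne_zero_iff.2 fun k hk => ?_)
    · simpa [sub_eq_zero] using ha.ne (Finset.ne_of_mem_erase hj).symm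
    · simpa [sub_eq_zero] using hb.ne (Finset.ne_of_mem_erase hk).symm
  · rw [← span_pair_X_sub_C_eq_ker_eval, Ideal.span_le]
    rintro p (rfl | rfl) <;> rw [SetLike.mem_coe, Submodule.mem_colon_singleton, smul_eq_mul]
    · rw [← mul_assoc, Finset.mul_prod_erase _ (fun j => X 0 - C (a j)) (Finset.mem_univ j₀)]
      exact Ideal.mul_mem_right _ _ (Ideal.subset_span (by simp))
    · rw [mul_left_comm, Finset.mul_prod_erase _ (fun k => X 1 - C (b k)) (Finset.mem_univ k₀)]
      exact Ideal.mul_mem_left _ _ (Ideal.subset_span (by simp))
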